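/- Let p/q be a positive irreducible fraction with p even and standard continued fraction expansion [a_0, ..., a_n]. An irreducible fraction r/s satisfies d(r/s, p/q) = 2 if and only if r/s = [a_0, ..., a_{n-1}, a_n + 2/t] for some odd integer t. The case t = -1 gives the mother M(p/q); for every odd t ≠ -1, p/q is the mother of r/s = [a_0, ..., a_{n-1}, a_n + 2/t]. -/

import Mathlib

/-- Evaluate the continued fraction `[a_0, …, a_{n-1}, x]` projectively:
the pair `(u, w)` represents the fraction `u/w` (with `(±1, 0)` representing
`∞`), and `[a, rest] = a + 1/rest` corresponds to `(u,w) ↦ (a*u + w, u)`. -/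
def cfFold (l : List ℤ) (x : ℤ × ℤ) : ℤ × ℤ :=
  l.foldr (fun a y => (a * y.1 + y.2, y.1)) x

/-- The coprime pair `(numerator, denominator)` of the continued fraction
`[a_0, …, a_n]`; the empty continued fraction is `∞ = (1, 0)`. -/
def cfPair (l : List ℤ) : ℤ × ℤ :=
  cfFold l (1, 0)

/-- The rational number represented by a pair. -/
def pairQ (x : ℤ × ℤ) : ℚ :=
  (x.1 : ℚ) / (x.2 : ℚ)

/-- The value of the continued fraction `[a_0, …, a_n]` as a rational number. -/
def cfVal (l : List ℤ) : ℚ :=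
  pairQ (cfPair l)

/-- `l = [a_0, …, a_n]` is a standard continued fraction expansion:
`a_0 ≥ 0`, `a_i ≥ 1` for `1 ≤ i ≤ n`, and `a_n ≥ 2`. -/
def IsStdCF (l : List ℤ) : Prop :=
  l ≠ [] ∧ 0 ≤ l.head! ∧ (∀ b ∈ l.tail, 1 ≤ b) ∧ 2 ≤ l.getLast!

/-- `m` is the mother of `x`: if `x = [a_0, …, a_n]` is the standard
continued fraction expansion, then `m = [a_0, …, a_{n-1}, a_n - 2]`. -/
def IsMother (x m : ℚ) : Prop :=
  ∃ (l : List ℤ) (a : ℤ), IsStdCF (l ++ [a]) ∧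
    x = cfVal (l ++ [a]) ∧ m = cfVal (l ++ [a - 2])

open Classical in
/-- The mother map `M`, as a function (defaulting to `0` where undefined). -/
noncomputable def motherFun (x : ℚ) : ℚ :=
  if h : ∃ m, IsMother x m then h.choose else 0

/-- The coprime-up-to-sign pair representing the continued fraction
`[a_0, …, a_{n-1}, a_n + 2/t]` with rational last entry
`a + 2/t = (a*t + 2)/t` (for odd `t` the pair `(a*t + 2, t)` is coprime). -/
def childPair (l : List ℤ) (a t : ℤ) : ℤ × ℤ :=
  cfFold l (a * t + 2, t)

/-!
Let `p'/q' = [a_0, …, a_{n-1}]` be the penultimate convergent, so that `p q' - q p' = ±1`.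
Since `y ↦ [a_0, …, a_{n-1}, y]` is a Möbius map taking the value `p/q` at `a_n` and `p'/q'` at
`∞`, the child `[a_0, …, a_{n-1}, a_n + 2/t]` is `(t p + 2 p') / (t q + 2 q')`. As `p` is even,
`q` and `p'` are odd. If `r/s` is reduced and `r q - p s = 2ε` with `ε = ±1`, then `r` is even,
`s` is odd, and `t = ε (p' s - r q')` is odd and solves `r (t q + 2 q') = (t p + 2 p') s`.
Conversely `(t p + 2 p', t q + 2 q')` has cross determinant `±2` with `(p, q)` and odd second
entry, hence is already reduced.

For the mother, `a_n + 2/t` is written as a standard tail `[c_1, …, c_k, b]` with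
`[c_1, …, c_k, b - 2] = a_n`: the tails are `[a_n + 2]` for `t = 1`, `[a_n, u, 2]` for
`t = 2u + 1 ≥ 3`, `[a_n - 1, 3]` for `t = -3` and `[a_n - 1, 1, -u - 2, 2]` for
`t = 2u + 1 ≤ -5`.
-/

lemma cfFold_append (l m : List ℤ) (x : ℤ × ℤ) :
    cfFold (l ++ m) x = cfFold l (cfFold m x) :=
  List.foldr_append

lemma cfFold_add (l : List ℤ) (x y : ℤ × ℤ) :
    cfFold l (x + y) = cfFold l x + cfFold l y := by
  induction l with
  | nil => rfl
  | cons a l ih =>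
    simp only [cfFold, List.foldr_cons] at *
    rw [ih]
    ext <;> simp only [Prod.fst_add, Prod.snd_add]
    ring

lemma cfFold_smul (l : List ℤ) (c : ℤ) (x : ℤ × ℤ) :
    cfFold l (c • x) = c • cfFold l x := by
  induction l with
  | nil => rfl
  | cons a l ih =>
    simp only [cfFold, List.foldr_cons] at *
    rw [ih]
    ext <;> simp only [Prod.smul_fst, Prod.smul_snd, smul_eq_mul]
    ring

lemma cfFold_neg (l : List ℤ) (x : ℤ × ℤ) : cfFold l (-x) = -cfFold l x := by
  simpa using cfFold_smul l (-1) x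

lemma cfFold_det (l : List ℤ) (x y : ℤ × ℤ) :
    (cfFold l x).1 * (cfFold l y).2 - (cfFold l x).2 * (cfFold l y).1
      = (-1) ^ l.length * (x.1 * y.2 - x.2 * y.1) := by
  induction l with
  | nil => simp [cfFold]
  | cons a l ih =>
    simp only [cfFold, List.foldr_cons, List.length_cons] at *
    linear_combination -ih

lemma cfPair_append_singleton (l : List ℤ) (a : ℤ) :
    cfPair (l ++ [a]) = cfFold l (a, 1) := by
  simp [cfPair, cfFold]

lemma isUnit_det_cfPair_append_singleton (l : List ℤ) (a : ℤ) :
    IsUnit ((cfPair (l ++ [a])).1 * (cfPair l).2 - (cfPair (l ++ [a])).2 * (cfPair l).1) := by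
  rw [cfPair_append_singleton, cfPair, cfFold_det]
  simpa using (isUnit_neg_one.pow l.length).neg

lemma childPair_eq (l : List ℤ) (a t : ℤ) :
    childPair l a t = t • cfPair (l ++ [a]) + (2 : ℤ) • cfPair l := by
  rw [cfPair_append_singleton, cfPair, ← cfFold_smul, ← cfFold_smul, ← cfFold_add, childPair]
  congr 1
  ext <;> simp only [Prod.fst_add, Prod.snd_add, Prod.smul_fst, Prod.smul_snd, smul_eq_mul] <;> ring

lemma childPair_neg_one (l : List ℤ) (a : ℤ) : childPair l a (-1) = -cfPair (l ++ [a - 2]) := by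
  rw [cfPair_append_singleton, ← cfFold_neg, childPair]
  congr 1
  ext <;> simp only [Prod.fst_neg, Prod.snd_neg]
  ring

lemma cfVal_append (l m : List ℤ) : cfVal (l ++ m) = pairQ (cfFold l (cfPair m)) := by
  rw [cfVal, cfPair, cfFold_append]
  rfl

lemma pairQ_smul (x : ℤ × ℤ) {c : ℤ} (hc : c ≠ 0) : pairQ (c • x) = pairQ x := by
  simp [pairQ, mul_div_mul_left, hc]

lemma IsStdCF.append {l m : List ℤ} {a b : ℤ} (hstd : IsStdCF (l ++ [a]))
    (hm : ∀ x ∈ m, 1 ≤ x) (hb : 2 ≤ b) : IsStdCF (l ++ m ++ [b]) := by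
  obtain ⟨-, h0, h1, -⟩ := hstd
  have hmb : ∀ x ∈ m ++ [b], 1 ≤ x := by
    intro x hx
    rcases List.mem_append.mp hx with hx | hx
    · exact hm x hx
    · rw [List.mem_singleton.mp hx]; omega
  refine ⟨by simp, ?_, ?_, by simpa using hb⟩
  · rcases l with _ | ⟨d, l⟩
    · rcases m with _ | ⟨c, m⟩
      · simp only [List.nil_append, List.head!_cons] at h0 ⊢
        omega
      · simpa using (hm c List.mem_cons_self).trans' zero_le_one
    · simpa using h0
  · rcases l with _ | ⟨d, l⟩
    · exact fun x hx => hmb x (List.mem_of_mem_tail hx)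
    · intro x hx
      simp only [List.cons_append, List.tail_cons, List.append_assoc, List.mem_append] at hx h1
      rcases hx with hx | hx
      · exact h1 x (by simp [hx])
      · exact hmb x (List.mem_append.mpr hx)

lemma Int.odd_of_isUnit {u : ℤ} (hu : IsUnit u) : Odd u := by
  rcases Int.isUnit_iff.mp hu with rfl | rfl <;> decide

lemma odd_of_isCoprime_of_even {r s : ℤ} (h : IsCoprime r s) (hr : Even r) : Odd s := by
  obtain ⟨u, v, huv⟩ := h
  by_contra hs
  rw [Int.not_odd_iff_even] at hs
  exact Int.not_even_one (huv ▸ (hr.mul_left u).add (hs.mul_left v))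

lemma isCoprime_of_abs_cross_eq_two {r s p q : ℤ} (h : |r * q - p * s| = 2) (hs : Odd s) :
    IsCoprime r s := by
  obtain ⟨k, rfl⟩ := hs
  rcases (abs_eq zero_le_two).mp h with h | h
  · exact ⟨-k * q, 1 + k * p, by linear_combination -k * h⟩
  · exact ⟨k * q, 1 - k * p, by linear_combination k * h⟩

lemma abs_cross_eq_of_isCoprime {r s r' s' : ℤ} (hrs : IsCoprime r s) (hrs' : IsCoprime r' s')
    (hs' : s' ≠ 0) (h : r * s' = r' * s) (p q : ℤ) :
    |r * q - p * s| = |r' * q - p * s'| := by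
  have hs : |s| = |s'| := by
    rw [Int.abs_eq_natAbs, Int.abs_eq_natAbs, Int.natAbs_eq_of_dvd_dvd
      (hrs.symm.dvd_of_dvd_mul_left ⟨r', by linear_combination h⟩)
      (hrs'.symm.dvd_of_dvd_mul_left ⟨r, by linear_combination -h⟩)]
  have key : (r * q - p * s) * s' = s * (r' * q - p * s') := by linear_combination q * h
  apply mul_right_cancel₀ (abs_ne_zero.mpr hs')
  rw [← abs_mul, key, abs_mul, hs, mul_comm]

lemma odd_mul_of_isUnit_det {p q p' q' : ℤ} (hE : IsUnit (p * q' - q * p')) (hp : Even p) :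
    Odd (q * p') := by
  simpa using (hp.mul_right q').sub_odd (Int.odd_of_isUnit hE)

lemma abs_cross_eq_two_iff {p q p' q' : ℤ} (hE : IsUnit (p * q' - q * p')) (hp : Even p)
    {r s : ℤ} (hrs : IsCoprime r s) :
    |r * q - p * s| = 2 ↔ ∃ t, Odd t ∧ r * (t * q + 2 * q') = (t * p + 2 * p') * s := by
  obtain ⟨hq, hp'⟩ := Int.odd_mul.mp (odd_mul_of_isUnit_det hE hp)
  constructor
  · intro h
    obtain ⟨ε, hε, hcross⟩ : ∃ ε : ℤ, IsUnit ε ∧ r * q - p * s = 2 * ε := by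
      rcases (abs_eq zero_le_two).mp h with h | h
      exacts [⟨1, isUnit_one, by linarith⟩, ⟨-1, isUnit_one.neg, by linarith⟩]
    have hr : Even r := by
      have : Even (r * q) := by
        rw [show r * q = 2 * ε + p * s by linarith]
        exact (even_two_mul ε).add (hp.mul_right s)
      exact (Int.even_mul.mp this).resolve_right (Int.not_even_iff_odd.mpr hq)
    have hs : Odd s := odd_of_isCoprime_of_even hrs hr
    refine ⟨ε * (p' * s - r * q'), (Int.odd_of_isUnit hε).mul ((hp'.mul hs).sub_even (hr.mul_right q')), ?_⟩
    linear_combination ε * (p' * s - r * q') * hcross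
      + 2 * (p' * s - r * q') * Int.isUnit_mul_self hε
  · rintro ⟨t, ht, heq⟩
    have hs' : Odd (t * q + 2 * q') := (ht.mul hq).add_even (even_two_mul q')
    have hdist : |(t * p + 2 * p') * q - p * (t * q + 2 * q')| = 2 := by
      rw [show (t * p + 2 * p') * q - p * (t * q + 2 * q') = -2 * (p * q' - q * p') by ring,
        abs_mul, Int.isUnit_iff_abs_eq.mp hE]
      rfl
    rwa [abs_cross_eq_of_isCoprime hrs (isCoprime_of_abs_cross_eq_two hdist hs')
      (fun h0 => by simp [h0] at hs') heq]

lemma isMother_childPair_of_tail {l m : List ℤ} {a b c t : ℤ} (hstd : IsStdCF (l ++ [a]))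
    (hm : ∀ x ∈ m, 1 ≤ x) (hb : 2 ≤ b) (hc : c ≠ 0)
    (hchild : cfPair (m ++ [b]) = c • (a * t + 2, t)) (hmother : cfPair (m ++ [b - 2]) = (a, 1)) :
    IsMother (pairQ (childPair l a t)) (cfVal (l ++ [a])) := by
  refine ⟨l ++ m, b, hstd.append hm hb, ?_, ?_⟩
  · rw [List.append_assoc, cfVal_append, hchild, cfFold_smul, pairQ_smul _ hc, childPair]
  · rw [List.append_assoc, cfVal_append l (m ++ _), hmother, cfVal, cfPair_append_singleton]

lemma exists_tail_eq_add_two_div {a t : ℤ} (ha : 2 ≤ a) (ht : Odd t) (ht1 : t ≠ -1) :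
    ∃ (m : List ℤ) (b c : ℤ), (∀ x ∈ m, 1 ≤ x) ∧ 2 ≤ b ∧ c ≠ 0 ∧
      cfPair (m ++ [b]) = c • (a * t + 2, t) ∧ cfPair (m ++ [b - 2]) = (a, 1) := by
  obtain ⟨u, rfl⟩ := ht
  rcases (by omega : 1 ≤ u ∨ u = 0 ∨ u = -2 ∨ u ≤ -3) with hu | rfl | rfl | hu <;>
  [refine ⟨[a, u], 2, 1, fun x hx => by simp at hx; omega, le_rfl, one_ne_zero, ?_, ?_⟩;
    refine ⟨[], a + 2, 1, by simp, by omega, one_ne_zero, ?_, ?_⟩;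
    refine ⟨[a - 1], 3, -1, fun x hx => by simp at hx; omega, by norm_num, by norm_num, ?_, ?_⟩;
    refine ⟨[a - 1, 1, -u - 2], 2, -1, fun x hx => by simp at hx; omega, le_rfl, by norm_num,
      ?_, ?_⟩] <;>
  ext <;> simp only [cfPair, cfFold, List.cons_append, List.nil_append, List.foldr_cons,
    List.foldr_nil, Prod.smul_fst, Prod.smul_snd, smul_eq_mul] <;> ring

theorem dist_two_iff_child_or_mother_general (p q : ℤ)
    (hev : 2 ∣ p)
    (l : List ℤ) (a : ℤ) (hstd : IsStdCF (l ++ [a]))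
    (hval : cfPair (l ++ [a]) = (p, q)) :
    (∀ r s : ℤ, Int.gcd r s = 1 →
      (|r * q - p * s| = 2 ↔
        ∃ t : ℤ, Odd t ∧ r * (childPair l a t).2 = (childPair l a t).1 * s)) ∧
    (childPair l a (-1)).1 * (cfPair (l ++ [a - 2])).2
      = (cfPair (l ++ [a - 2])).1 * (childPair l a (-1)).2 ∧
    (∀ t : ℤ, Odd t → t ≠ -1 →
      IsMother (pairQ (childPair l a t)) ((p : ℚ) / q)) := by
  have hchild (t : ℤ) : childPair l a t = (t * p + 2 * (cfPair l).1, t * q + 2 * (cfPair l).2) := by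
    rw [childPair_eq, hval]
    ext <;> simp
  refine ⟨fun r s hrs => ?_, ?_, fun t ht ht1 => ?_⟩
  · have hdet := isUnit_det_cfPair_append_singleton l a
    rw [hval] at hdet
    simp only [hchild]
    exact abs_cross_eq_two_iff hdet (even_iff_two_dvd.mpr hev) (Int.isCoprime_iff_gcd_eq_one.mpr hrs)
  · rw [childPair_neg_one, Prod.fst_neg, Prod.snd_neg]
    ring
  · obtain ⟨m, b, c, hm, hb, hc, htail, hmother⟩ :=
      exists_tail_eq_add_two_div (by simpa using hstd.2.2.2) ht ht1
    simpa [cfVal, hval, pairQ] using isMother_childPair_of_tail hstd hm hb hc htail hmother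

/-- Let `p/q` be a positive irreducible fraction with `p` even and standard
continued fraction expansion `l ++ [a]`.  An irreducible fraction `r/s`
satisfies `d(r/s, p/q) = 2` iff `r/s = [a_0, …, a_{n-1}, a_n + 2/t]` for
some odd integer `t` (equality of fractions stated by cross-multiplication).
The case `t = -1` gives the mother `M(p/q) = [a_0, …, a_{n-1}, a_n - 2]`,
and for every odd `t ≠ -1`, `p/q` is the mother of
`[a_0, …, a_{n-1}, a_n + 2/t]`. -/
theorem dist_two_iff_child_or_mother (p q : ℤ) (hp : 0 < p) (hq : 0 < q)
    (hco : Int.gcd p q = 1) (hev : 2 ∣ p)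
    (l : List ℤ) (a : ℤ) (hstd : IsStdCF (l ++ [a]))
    (hval : cfPair (l ++ [a]) = (p, q)) :
    (∀ r s : ℤ, Int.gcd r s = 1 →
      (|r * q - p * s| = 2 ↔
        ∃ t : ℤ, Odd t ∧ r * (childPair l a t).2 = (childPair l a t).1 * s)) ∧
    (childPair l a (-1)).1 * (cfPair (l ++ [a - 2])).2
      = (cfPair (l ++ [a - 2])).1 * (childPair l a (-1)).2 ∧
    (∀ t : ℤ, Odd t → t ≠ -1 →
      IsMother (pairQ (childPair l a t)) ((p : ℚ) / q)) :=
  dist_two_iff_child_or_mother_general p q hev l a hstd hval
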